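/- arXiv:1805.08429 — 3 statements merged into one kernel-verified Lean document; each statement's English description precedes it below -/
import Mathlib

section
/- Let V be a finite set of n validators, F ⊆ V the set of Byzantine validators with 3·|F| < n, and let votes : V → Finset(Value) record the set of values each validator prevoted in a given round, with the property that every correct validator v ∈ V \ F satisfies |votes v| ≤ 1 (correct validators prevote at most once per round). If two values B and B' each have a supporter set {v ∈ V | B ∈ votes v}, respectively {v ∈ V | B' ∈ votes v}, of cardinality strictly greater than 2·n/3 (formally 3·card > 2·n), then B = B'. In other words, at most one value can gather more than two thirds of the prevotes in a round. -/
/-!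
Two quorums of more than two thirds of the validators overlap in more than a third of them, hence
in a correct validator. That validator prevoted both values, and a correct validator prevotes at
most one.
-/

open Finset

theorem Finset.exists_mem_mem_notMem_of_card_add_lt {α : Type*} {V F S S' : Finset α}
    (hS : S ⊆ V) (hS' : S' ⊆ V) (hcard : #V + #F < #S + #S') :
    ∃ v ∈ S, v ∈ S' ∧ v ∉ F := by
  classical
  have hsdiff : #V < #(S \ F) + #S' := by
    have := le_card_sdiff F S
    omega
  obtain ⟨v, hv⟩ := inter_nonempty_of_card_lt_card_add_card (sdiff_subset.trans hS) hS' hsdiff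
  rw [mem_inter, mem_sdiff] at hv
  exact ⟨v, hv.1.1, hv.2, hv.1.2⟩

theorem at_most_one_two_thirds_value_general {α Value : Type*} [DecidableEq Value]
    (V F : Finset α) (n : ℕ) (hn : V.card = n)
    (hF : 3 * F.card < n)
    (votes : α → Finset Value)
    (hcorrect : ∀ v ∈ V, v ∉ F → (votes v).card ≤ 1)
    (B B' : Value)
    (hB : 3 * (V.filter (fun v => B ∈ votes v)).card > 2 * n)
    (hB' : 3 * (V.filter (fun v => B' ∈ votes v)).card > 2 * n) :
    B = B' := by
  obtain ⟨v, hvB, hvB', hvF⟩ := exists_mem_mem_notMem_of_card_add_lt (F := F)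
    (filter_subset (fun v => B ∈ votes v) V) (filter_subset (fun v => B' ∈ votes v) V) (by omega)
  rw [mem_filter] at hvB hvB'
  exact card_le_one.mp (hcorrect v hvB.1 hvF) B hvB.2 B' hvB'.2

/-- If correct validators prevote at most one value per round,
then at most one value can gather more than two thirds of the prevotes. -/
theorem at_most_one_two_thirds_value {α Value : Type*} [DecidableEq α] [DecidableEq Value]
    (V F : Finset α) (n : ℕ) (hn : V.card = n)
    (hFV : F ⊆ V) (hF : 3 * F.card < n)
    (votes : α → Finset Value)
    (hcorrect : ∀ v ∈ V, v ∉ F → (votes v).card ≤ 1)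
    (B B' : Value)
    (hB : 3 * (V.filter (fun v => B ∈ votes v)).card > 2 * n)
    (hB' : 3 * (V.filter (fun v => B' ∈ votes v)).card > 2 * n) :
    B = B' :=
  at_most_one_two_thirds_value_general V F n hn hF votes hcorrect B B' hB hB'
end

section
/- Let V be a finite set of n validators, F ⊆ V the set of Byzantine validators, and let X ⊆ V \ F be a set of correct validators with 3·|X| > n. Let votes : V → Finset(Value) record the prevotes of a round, and suppose every validator in X prevotes only the value B, i.e. for every v ∈ X, votes v ⊆ {B}. Then for every value B' ≠ B, the supporter set {v ∈ V | B' ∈ votes v} has cardinality at most 2·n/3 (formally 3·card ≤ 2·n), so no value different from B can gather more than two thirds of the prevotes in that round. -/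
namespace Finset

variable {α : Type*} [DecidableEq α] {V X : Finset α} {p : α → Prop} [DecidablePred p]

theorem card_filter_le_card_sub_of_forall_not (hXV : X ⊆ V) (hX : ∀ v ∈ X, ¬ p v) :
    (V.filter p).card ≤ V.card - X.card := by
  have hsub : V.filter p ⊆ V \ X := fun v hv => by
    rw [mem_filter] at hv
    exact mem_sdiff.mpr ⟨hv.1, fun hvX => hX v hvX hv.2⟩
  calc (V.filter p).card ≤ (V \ X).card := card_le_card hsub
    _ = V.card - X.card := card_sdiff_of_subset hXV

theorem three_mul_card_filter_le_of_blocking (hXV : X ⊆ V) (hXcard : V.card < 3 * X.card)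
    (hX : ∀ v ∈ X, ¬ p v) : 3 * (V.filter p).card ≤ 2 * V.card := by
  have hfilter := card_filter_le_card_sub_of_forall_not hXV hX
  have hXV_card : X.card ≤ V.card := card_le_card hXV
  omega

end Finset

theorem blocking_set_prevents_other_quorum_general {α Value : Type*} [DecidableEq α] [DecidableEq Value]
    (V F X : Finset α) (n : ℕ) (hn : V.card = n)
    (hX : X ⊆ V \ F) (hXcard : 3 * X.card > n)
    (votes : α → Finset Value) (B : Value)
    (hvotes : ∀ v ∈ X, votes v ⊆ {B}) :
    ∀ B' : Value, B' ≠ B → 3 * (V.filter (fun v => B' ∈ votes v)).card ≤ 2 * n := by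
  intro B' hB'
  subst hn
  have hXV : X ⊆ V := hX.trans Finset.sdiff_subset
  have hX_not_vote : ∀ v ∈ X, B' ∉ votes v := fun v hv hB'v =>
    hB' (Finset.mem_singleton.mp (hvotes v hv hB'v))
  exact Finset.three_mul_card_filter_le_of_blocking hXV hXcard hX_not_vote

/-- If a set `X` of more than one third of the validators
consists of correct validators that prevote only the value `B`, then no
value different from `B` can gather more than two thirds of the prevotes. -/
theorem blocking_set_prevents_other_quorum {α Value : Type*} [DecidableEq α] [DecidableEq Value]
    (V F X : Finset α) (n : ℕ) (hn : V.card = n)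
    (hFV : F ⊆ V) (hX : X ⊆ V \ F) (hXcard : 3 * X.card > n)
    (votes : α → Finset Value) (B : Value)
    (hvotes : ∀ v ∈ X, votes v ⊆ {B}) :
    ∀ B' : Value, B' ≠ B → 3 * (V.filter (fun v => B' ∈ votes v)).card ≤ 2 * n :=
  blocking_set_prevents_other_quorum_general V F X n hn hX hXcard votes B hvotes
end

section
/- Let V be a finite set of n validators, F ⊆ V the set of Byzantine validators, and let X ⊆ V \ F be a set of correct validators with 3·|X| > n. Let votes : ℕ → V → Finset(Value) record the prevotes of every round, and fix a round r₀ and a value B such that for every round r ≥ r₀ and every v ∈ X, votes r v ⊆ {B}. Then for every round r ≥ r₀ and every value B' ≠ B, the supporter set {v ∈ V | B' ∈ votes r v} satisfies 3·card ≤ 2·n. Consequently, in every round from r₀ onward, only the value B can gather more than two thirds of the prevotes. -/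
/-!
Two disjoint subsets of `V` have at most `|V|` members together, so once a set of more than
`n/3` validators is locked on `B`, the supporters of any other value, being disjoint from it,
number fewer than `2n/3`.
-/

theorem Finset.three_mul_card_le_two_mul_of_disjoint {α : Type*} [DecidableEq α]
    {V S X : Finset α} (hSV : S ⊆ V) (hXV : X ⊆ V) (hSX : Disjoint S X)
    (hX : V.card < 3 * X.card) : 3 * S.card ≤ 2 * V.card := by
  have hunion : S.card + X.card ≤ V.card := by
    rw [← Finset.card_union_of_disjoint hSX]
    exact Finset.card_le_card (Finset.union_subset hSV hXV)
  omega

theorem disjoint_filter_mem_of_subset_singleton {α Value : Type*} [DecidableEq Value]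
    {V X : Finset α} {votes : α → Finset Value} {B B' : Value}
    (hlocked : ∀ v ∈ X, votes v ⊆ {B}) (hB' : B' ≠ B) :
    Disjoint (V.filter fun v => B' ∈ votes v) X := by
  refine Finset.disjoint_left.mpr fun v hv hvX => hB' ?_
  exact Finset.mem_singleton.mp (hlocked v hvX (Finset.mem_filter.mp hv).2)

theorem lock_persistence_general {α Value : Type*} [DecidableEq α] [DecidableEq Value]
    (V F X : Finset α) (n : ℕ) (hn : V.card = n)
    (hX : X ⊆ V \ F) (hXcard : 3 * X.card > n)
    (votes : ℕ → α → Finset Value) (r₀ : ℕ) (B : Value)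
    (hvotes : ∀ r, r₀ ≤ r → ∀ v ∈ X, votes r v ⊆ {B}) :
    ∀ r, r₀ ≤ r → ∀ B' : Value, B' ≠ B →
      3 * (V.filter (fun v => B' ∈ votes r v)).card ≤ 2 * n := by
  intro r hr B' hB'
  subst hn
  exact Finset.three_mul_card_le_two_mul_of_disjoint (Finset.filter_subset _ V)
    (hX.trans Finset.sdiff_subset)
    (disjoint_filter_mem_of_subset_singleton (hvotes r hr) hB') hXcard

/-- lock persistence, combinatorial content of Lemma 3: if a set
`X` of more than `n/3` correct validators prevotes only `B` in every round
from `r₀` onward, then in every round `r ≥ r₀` no value `B' ≠ B` can reach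
the two-thirds prevote threshold. -/
theorem lock_persistence {α Value : Type*} [DecidableEq α] [DecidableEq Value]
    (V F X : Finset α) (n : ℕ) (hn : V.card = n)
    (hFV : F ⊆ V) (hX : X ⊆ V \ F) (hXcard : 3 * X.card > n)
    (votes : ℕ → α → Finset Value) (r₀ : ℕ) (B : Value)
    (hvotes : ∀ r, r₀ ≤ r → ∀ v ∈ X, votes r v ⊆ {B}) :
    ∀ r, r₀ ≤ r → ∀ B' : Value, B' ≠ B →
      3 * (V.filter (fun v => B' ∈ votes r v)).card ≤ 2 * n :=
  lock_persistence_general V F X n hn hX hXcard votes r₀ B hvotes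
end
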